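/- arXiv:1604.03078 — 8 statements merged into one kernel-verified Lean document; each statement's English description precedes it below -/
import Mathlib

section
/- The structural rule of permutation is derivable in Gödel's natural deduction system G: for all formulas P, Q, R and finite lists of formulas Δ, Γ, if the sequent Δ,P,Q,Γ → R is provable in G, then the sequent Δ,Q,P,Γ → R is provable in G. -/
/-- Formulas of Gödel's propositional language: variables, negation ∼, implication ⊃. -/
inductive Fml : Type
  | var : Nat → Fml
  | neg : Fml → Fml
  | imp : Fml → Fml → Fml

open Fml

/-- Provability of sequents Δ → P in Gödel's natural deduction system G.
    `Δ, P` is represented by `Δ ++ [P]` and `P, Δ` by `P :: Δ`. -/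
inductive GProof : List Fml → Fml → Prop
  /-- axiom schema P → P -/
  | ax (P : Fml) : GProof [P] P
  /-- left thinning -/
  | thinL (P : Fml) {Δ : List Fml} {Q : Fml} : GProof Δ Q → GProof (P :: Δ) Q
  /-- right thinning -/
  | thinR (P : Fml) {Δ : List Fml} {Q : Fml} : GProof Δ Q → GProof (Δ ++ [P]) Q
  /-- implication introduction -/
  | impI {Δ : List Fml} {P Q : Fml} : GProof (Δ ++ [P]) Q → GProof Δ (imp P Q)
  /-- additive implication elimination -/
  | impE {Δ : List Fml} {P Q : Fml} : GProof Δ P → GProof Δ (imp P Q) → GProof Δ Q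
  /-- strong reductio ad absurdum -/
  | raa {Δ : List Fml} {P Q : Fml} :
      GProof (Δ ++ [neg P]) Q → GProof (Δ ++ [neg P]) (neg Q) → GProof Δ P

/-- Repeated right thinning. -/
lemma GProof.weakR {Δ : List Fml} {R : Fml} (h : GProof Δ R) :
    ∀ Γ : List Fml, GProof (Δ ++ Γ) R := by
  intro Γ
  induction Γ generalizing Δ with
  | nil => simpa using h
  | cons a Γ ih =>
      have := ih (Δ := Δ ++ [a]) (GProof.thinR a h)
      simpa using this

/-- Any formula in the context is provable. -/
lemma GProof.of_mem {Γ : List Fml} {P : Fml} (h : P ∈ Γ) : GProof Γ P := by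
  induction Γ with
  | nil => simp at h
  | cons a Γ ih =>
      rcases List.mem_cons.mp h with rfl | h
      · have := (GProof.ax P).weakR Γ
        simpa using this
      · exact GProof.thinL a (ih h)

/-- Provability is monotone in the context (as a set). -/
lemma GProof.mono {Δ : List Fml} {R : Fml} (h : GProof Δ R) :
    ∀ Γ : List Fml, (∀ x ∈ Δ, x ∈ Γ) → GProof Γ R := by
  induction h with
  | ax P => intro Γ hs; exact GProof.of_mem (hs P (by simp))
  | thinL P h ih =>
      intro Γ hs; exact ih Γ fun x hx => hs x (by simp [hx])
  | thinR P h ih =>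
      intro Γ hs; exact ih Γ fun x hx => hs x (by simp [hx])
  | impI h ih =>
      intro Γ hs
      refine GProof.impI (ih _ ?_)
      intro x hx
      rcases List.mem_append.mp hx with hx | hx
      · exact List.mem_append.mpr (Or.inl (hs x (by simp [hx])))
      · exact List.mem_append.mpr (Or.inr hx)
  | impE h1 h2 ih1 ih2 =>
      intro Γ hs; exact GProof.impE (ih1 Γ hs) (ih2 Γ hs)
  | raa h1 h2 ih1 ih2 =>
      intro Γ hs
      refine GProof.raa (ih1 _ ?_) (ih2 _ ?_) <;>
      · intro x hx
        rcases List.mem_append.mp hx with hx | hx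
        · exact List.mem_append.mpr (Or.inl (hs x (by simp [hx])))
        · exact List.mem_append.mpr (Or.inr hx)

/-- The structural rule of permutation is derivable in Gödel's system G. -/
theorem permutation_derivable (P Q R : Fml) (Δ Γ : List Fml)
    (h : GProof (Δ ++ [P, Q] ++ Γ) R) : GProof (Δ ++ [Q, P] ++ Γ) R := by
  refine h.mono _ ?_
  intro x hx
  simp only [List.mem_append, List.mem_cons, List.mem_singleton] at hx ⊢
  tauto
end

section
/- The structural rule of contraction is derivable in Gödel's natural deduction system G: for all formulas P, Q and every finite list of formulas Δ, if the sequent Δ,P,P → Q is provable in G, then the sequent Δ,P → Q is provable in G. -/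
open Fml

lemma last_member (P : Fml) : ∀ Δ : List Fml, GProof (Δ ++ [P]) P := by
  intro Δ
  induction Δ with
  | nil => exact GProof.ax P
  | cons a Δ ih => exact GProof.thinL a ih

/-- The structural rule of contraction is derivable in Gödel's system G. -/
theorem contraction_derivable (P Q : Fml) (Δ : List Fml)
    (h : GProof (Δ ++ [P, P]) Q) : GProof (Δ ++ [P]) Q := by
  have h' : GProof ((Δ ++ [P]) ++ [P]) Q := by simpa using h
  exact GProof.impE (last_member P Δ) (GProof.impI h')
end

section
/- The ex falso rule is derivable in Gödel's natural deduction system G: for all formulas P, Q and every finite list of formulas Δ, if the sequents Δ → Q and Δ → ∼Q are both provable in G, then the sequent Δ → P is provable in G. -/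
open Fml

/-- The ex falso rule is derivable in Gödel's system G. -/
theorem ex_falso_rule_derivable (P Q : Fml) (Δ : List Fml)
    (h1 : GProof Δ Q) (h2 : GProof Δ (neg Q)) : GProof Δ P := GProof.raa (GProof.thinR _ h1) (GProof.thinR _ h2)
end

section
/- Gödel's natural deduction system G is sound and complete for classical Boolean semantics: a sequent Δ → P is provable in G if and only if every Boolean valuation (assignment of truth values to propositional variables, extended to formulas by interpreting ∼ as classical negation and ⊃ as material implication) that makes every formula in Δ true also makes P true. In particular, P is a classical tautology if and only if the sequent with empty left-hand side → P is provable in G. -/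
open Fml

/-- Boolean valuation of formulas: ∼ as negation, ⊃ as material implication. -/
def evalG (v : Nat → Bool) : Fml → Bool
  | var n => v n
  | neg P => !(evalG v P)
  | imp P Q => !(evalG v P) || evalG v Q

/-!
Soundness is an induction on derivations. For completeness, the rules of G first give
weakening: a derivation of `Δ → P` curries to one of `→ Δ₁ ⊃ (Δ₂ ⊃ ⋯ ⊃ P)`, which can be
uncurried in any context containing `Δ`. With contexts up to inclusion, Kalmár's argument
applies: for a valuation `v`, the literals `pᵥ` (`p` or `∼p` as `v p` is true or false) prove
`P` or `∼P` according to the value of `P` under `v`. For a tautology the literals are then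
discharged one variable at a time by a case split derived from reductio ad absurdum, and a
valid sequent `Δ → P` reduces to the tautology `Δ₁ ⊃ (Δ₂ ⊃ ⋯ ⊃ P)`.
-/

def signed (b : Bool) (P : Fml) : Fml := cond b P (neg P)

@[simp] theorem signed_true (P : Fml) : signed true P = P := rfl

@[simp] theorem signed_false (P : Fml) : signed false P = neg P := rfl

def Fml.vars : Fml → List Nat
  | var n => [n]
  | neg P => P.vars
  | imp P Q => P.vars ++ Q.vars

def literals (v : Nat → Bool) (L : List Nat) : List Fml := L.map fun n => signed (v n) (var n)

theorem literals_update_subset (v : Nat → Bool) (n : Nat) (b : Bool) (L : List Nat) :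
    literals (Function.update v n b) (n :: L) ⊆ signed b (var n) :: literals v L := by
  intro R hR
  obtain ⟨m, hm, rfl⟩ := List.mem_map.mp hR
  by_cases hmn : m = n
  · simp [hmn]
  · have hm : m ∈ L := by simpa [hmn] using hm
    rw [Function.update_of_ne hmn]
    exact List.mem_cons_of_mem _ (List.mem_map_of_mem hm)

theorem evalG_foldr_imp (v : Nat → Bool) (Δ : List Fml) (P : Fml) :
    evalG v (Δ.foldr imp P) = true ↔ ((∀ Q ∈ Δ, evalG v Q = true) → evalG v P = true) := by
  induction Δ with
  | nil => simp
  | cons A Δ ih =>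
    cases hA : evalG v A <;> simp [evalG, ih, hA]

namespace GProof

variable {Δ Δ' : List Fml} {A P Q : Fml}

theorem append_left (Γ : List Fml) (h : GProof Δ P) : GProof (Γ ++ Δ) P := by
  induction Γ with
  | nil => exact h
  | cons A Γ ih => exact thinL A ih

theorem append_right (h : GProof Δ P) (Γ : List Fml) : GProof (Δ ++ Γ) P := by
  induction Γ using List.reverseRecOn with
  | nil => simpa using h
  | append_singleton Γ A ih => simpa using thinR A ih

theorem of_mem_s9 (h : P ∈ Δ) : GProof Δ P := by
  obtain ⟨s, t, rfl⟩ := List.append_of_mem h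
  simpa using ((ax P).append_right t).append_left s

theorem foldr_imp (h : GProof Δ P) : GProof [] (Δ.foldr imp P) := by
  induction Δ using List.reverseRecOn generalizing P with
  | nil => exact h
  | append_singleton Δ A ih => simpa using ih (impI h)

theorem of_foldr_imp (Γ : List Fml) (h : GProof Δ (Γ.foldr imp P)) (hΓ : ∀ Q ∈ Γ, GProof Δ Q) :
    GProof Δ P := by
  induction Γ generalizing P with
  | nil => exact h
  | cons A Γ ih =>
    exact ih (impE (hΓ A (by simp)) h) fun Q hQ => hΓ Q (by simp [hQ])

theorem mono_s9 (h : GProof Δ P) (hs : Δ ⊆ Δ') : GProof Δ' P :=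
  of_foldr_imp Δ (by simpa using h.foldr_imp.append_left Δ') fun _ hQ => of_mem_s9 (hs hQ)

theorem impI_cons (h : GProof (P :: Δ) Q) : GProof Δ (imp P Q) :=
  impI (h.mono_s9 (by simp))

theorem raa_cons (h₁ : GProof (neg P :: Δ) Q) (h₂ : GProof (neg P :: Δ) (neg Q)) : GProof Δ P :=
  raa (h₁.mono_s9 (by simp)) (h₂.mono_s9 (by simp))

theorem absurd (h₁ : GProof Δ P) (h₂ : GProof Δ (neg P)) : GProof Δ Q :=
  raa_cons (thinL _ h₁) (thinL _ h₂)

theorem of_neg_neg (h : GProof Δ (neg (neg P))) : GProof Δ P :=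
  raa_cons (of_mem_s9 (by simp)) (thinL _ h)

theorem neg_neg (h : GProof Δ P) : GProof Δ (neg (neg P)) :=
  raa_cons (thinL _ h) (of_neg_neg (of_mem_s9 (by simp)))

theorem imp_of_neg (h : GProof Δ (neg P)) : GProof Δ (imp P Q) :=
  impI_cons (absurd (of_mem_s9 (by simp)) (thinL _ h))

theorem imp_of_right (h : GProof Δ Q) : GProof Δ (imp P Q) :=
  impI_cons (thinL _ h)

theorem neg_imp (h₁ : GProof Δ P) (h₂ : GProof Δ (neg Q)) : GProof Δ (neg (imp P Q)) :=
  raa_cons (impE (thinL _ h₁) (of_neg_neg (of_mem_s9 (by simp)))) (thinL _ h₂)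

theorem by_cases (h₁ : GProof (A :: Δ) P) (h₂ : GProof (neg A :: Δ) P) : GProof Δ P := by
  have hA : GProof (neg P :: Δ) A :=
    raa_cons (h₂.mono_s9 (List.cons_subset_cons _ (List.subset_cons_self _ _))) (of_mem_s9 (by simp))
  exact raa_cons (impE hA (thinL _ (impI_cons h₁))) (of_mem_s9 (by simp))

theorem sound (h : GProof Δ P) (v : Nat → Bool)
    (hΔ : ∀ Q ∈ Δ, evalG v Q = true) : evalG v P = true := by
  induction h with
  | ax => simpa using hΔ
  | thinL _ _ ih => exact ih fun Q hQ => hΔ Q (by simp [hQ])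
  | thinR _ _ ih => exact ih fun Q hQ => hΔ Q (by simp [hQ])
  | @impI Δ P Q _ ih =>
    have hQ (hP : evalG v P = true) : evalG v Q = true :=
      ih (by simpa [or_imp, forall_and, hP] using hΔ)
    cases hP : evalG v P <;> simp_all [evalG]
  | impE _ _ ih₁ ih₂ => simp_all [evalG]
  | @raa Δ P Q _ _ ih₁ ih₂ =>
    by_contra hP
    have hΔ' : ∀ R ∈ Δ ++ [neg P], evalG v R = true := by
      simpa [or_imp, forall_and, evalG] using And.intro hΔ hP
    simpa [evalG, ih₁ hΔ'] using ih₂ hΔ'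

theorem kalmar (v : Nat → Bool) {L : List Nat} (hL : P.vars ⊆ L) :
    GProof (literals v L) (signed (evalG v P) P) := by
  induction P with
  | var n => exact of_mem_s9 (List.mem_map_of_mem (hL (by simp [Fml.vars])))
  | neg P ih =>
    have hP := ih (by simpa [Fml.vars] using hL)
    cases h : evalG v P <;> simp only [h, evalG, signed_true, signed_false, Bool.not_true,
      Bool.not_false] at hP ⊢
    · exact hP
    · exact hP.neg_neg
  | imp P Q ihP ihQ =>
    have hP := ihP fun n hn => hL (by simp [Fml.vars, hn])
    have hQ := ihQ fun n hn => hL (by simp [Fml.vars, hn])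
    cases hp : evalG v P <;> cases hq : evalG v Q <;>
      simp only [hp, hq, evalG, signed_true, signed_false, Bool.not_true, Bool.not_false,
        Bool.true_or, Bool.false_or] at hP hQ ⊢
    · exact hP.imp_of_neg
    · exact hQ.imp_of_right
    · exact hP.neg_imp hQ
    · exact hQ.imp_of_right

theorem of_forall_literals {L : List Nat} (h : ∀ v, GProof (literals v L) P) :
    GProof [] P := by
  induction L with
  | nil => exact h fun _ => true
  | cons n L ih =>
    refine ih fun v => by_cases (A := var n) ?_ ?_
    · exact (h (Function.update v n true)).mono_s9 (literals_update_subset v n true L)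
    · exact (h (Function.update v n false)).mono_s9 (literals_update_subset v n false L)

theorem of_tautology (h : ∀ v, evalG v P = true) : GProof [] P :=
  of_forall_literals fun v => by simpa [h v] using kalmar v (List.Subset.refl P.vars)

theorem of_entails
    (h : ∀ v : Nat → Bool, (∀ Q ∈ Δ, evalG v Q = true) → evalG v P = true) : GProof Δ P :=
  of_foldr_imp Δ ((of_tautology fun v => (evalG_foldr_imp v Δ P).mpr (h v)).mono_s9 (by simp))
    fun _ => of_mem_s9

end GProof

/-- Gödel's system G is sound and complete for classical Boolean semantics; in
    particular, P is a tautology iff the sequent → P with empty left side is provable. -/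
theorem soundness_completeness :
    (∀ (Δ : List Fml) (P : Fml),
      GProof Δ P ↔
        ∀ v : Nat → Bool, (∀ Q ∈ Δ, evalG v Q = true) → evalG v P = true) ∧
    (∀ P : Fml, (∀ v : Nat → Bool, evalG v P = true) ↔ GProof [] P) :=
  ⟨fun _ _ => ⟨GProof.sound, GProof.of_entails⟩,
    fun _ => ⟨GProof.of_tautology, fun h v => h.sound v (by simp)⟩⟩
end

section
/- The weak (constructive) version of reductio ad absurdum is derivable in the negation-conjunction system NC: for all formulas P, Q and every finite list of formulas Δ, if the sequents Δ,P → Q and Δ,P → ∼Q are both provable in NC, then the sequent Δ → ∼P is provable in NC. -/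
/-- Formulas of the negation-conjunction language: variables, negation ∼, conjunction ∧. -/
inductive FNC : Type
  | var : Nat → FNC
  | neg : FNC → FNC
  | conj : FNC → FNC → FNC

open FNC

/-- Provability of sequents Δ → P in the negation-conjunction system NC.
    `Δ, P` is represented by `Δ ++ [P]` and `P, Δ` by `P :: Δ`. -/
inductive NCProof : List FNC → FNC → Prop
  /-- axiom schema P → P -/
  | ax (P : FNC) : NCProof [P] P
  /-- left thinning -/
  | thinL (P : FNC) {Δ : List FNC} {Q : FNC} : NCProof Δ Q → NCProof (P :: Δ) Q
  /-- right thinning -/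
  | thinR (P : FNC) {Δ : List FNC} {Q : FNC} : NCProof Δ Q → NCProof (Δ ++ [P]) Q
  /-- conjunction introduction -/
  | conjI {Δ : List FNC} {P Q : FNC} :
      NCProof Δ P → NCProof Δ Q → NCProof Δ (conj P Q)
  /-- conjunction elimination (left) -/
  | conjE1 {Δ : List FNC} {P Q : FNC} : NCProof Δ (conj P Q) → NCProof Δ P
  /-- conjunction elimination (right) -/
  | conjE2 {Δ : List FNC} {P Q : FNC} : NCProof Δ (conj P Q) → NCProof Δ Q
  /-- simple cut -/
  | cut {R P : FNC} {Δ : List FNC} {Q : FNC} :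
      NCProof [R] P → NCProof (Δ ++ [P]) Q → NCProof (Δ ++ [R]) Q
  /-- strong reductio ad absurdum -/
  | raa {Δ : List FNC} {P Q : FNC} :
      NCProof (Δ ++ [neg P]) Q → NCProof (Δ ++ [neg P]) (neg Q) → NCProof Δ P

/-- The weak (constructive) version of reductio ad absurdum is derivable in NC. -/
theorem weak_raa_derivable (P Q : FNC) (Δ : List FNC)
    (h1 : NCProof (Δ ++ [P]) Q) (h2 : NCProof (Δ ++ [P]) (neg Q)) :
    NCProof Δ (neg P) := by
  have dne : NCProof [neg (neg P)] P :=
    NCProof.raa (Δ := [neg (neg P)]) (Q := neg P)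
      (NCProof.thinL (neg (neg P)) (NCProof.ax (neg P)))
      (NCProof.thinR (neg P) (NCProof.ax (neg (neg P))))
  exact NCProof.raa (NCProof.cut dne h1) (NCProof.cut dne h2)
end

section
/- Implication introduction for defined implication is derivable in the negation-conjunction system NC: for all formulas P, Q and every finite list of formulas Δ, if the sequent Δ,P → Q is provable in NC, then the sequent Δ → ∼(P ∧ ∼Q) is provable in NC, where P ⊃ Q is defined as ∼(P ∧ ∼Q). -/
open FNC

theorem thinL_many (Δ : List FNC) {L : List FNC} {Q : FNC}
    (h : NCProof L Q) : NCProof (Δ ++ L) Q := by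
  induction Δ with
  | nil => exact h
  | cons a t ih => exact NCProof.thinL a ih

/-- Implication introduction for the defined implication P ⊃ Q := ∼(P ∧ ∼Q)
    is derivable in NC. -/
theorem defined_impI_derivable (P Q : FNC) (Δ : List FNC)
    (h : NCProof (Δ ++ [P]) Q) : NCProof Δ (neg (conj P (neg Q))) := by
  set X := conj P (neg Q) with hX
  -- double negation elimination on a singleton context
  have dne : NCProof [neg (neg X)] X := by
    apply NCProof.raa (Δ := [neg (neg X)]) (P := X) (Q := neg X)
    · exact NCProof.thinL _ (NCProof.ax (neg X))
    · exact NCProof.thinR _ (NCProof.ax (neg (neg X)))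
  have dP : NCProof [neg (neg X)] P := NCProof.conjE1 dne
  have dNQ : NCProof [neg (neg X)] (neg Q) := NCProof.conjE2 dne
  apply NCProof.raa (Δ := Δ) (P := neg X) (Q := Q)
  · exact NCProof.cut dP h
  · exact NCProof.cut dNQ (thinL_many Δ (NCProof.ax (neg Q)))
end

section
/- Implication elimination for defined implication is derivable in the negation-conjunction system NC: for all formulas P, Q and every finite list of formulas Δ, if the sequents Δ → P and Δ → ∼(P ∧ ∼Q) are both provable in NC, then the sequent Δ → Q is provable in NC, where P ⊃ Q is defined as ∼(P ∧ ∼Q). -/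
open FNC

theorem NC_lastAx (Δ : List FNC) (A : FNC) : NCProof (Δ ++ [A]) A := by
  induction Δ with
  | nil => exact NCProof.ax A
  | cons h t ih => exact NCProof.thinL h ih

/-- Implication elimination for the defined implication P ⊃ Q := ∼(P ∧ ∼Q)
    is derivable in NC. -/
theorem defined_impE_derivable (P Q : FNC) (Δ : List FNC)
    (h1 : NCProof Δ P) (h2 : NCProof Δ (neg (conj P (neg Q)))) :
    NCProof Δ Q := NCProof.raa
    (NCProof.conjI (NCProof.thinR (neg Q) h1) (NC_lastAx Δ (neg Q)))
    (NCProof.thinR (neg Q) h2)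
end

section
/- For formulas in the negation-conjunction language, classical and intuitionistic validity coincide (the Glivenko-type consequence Gödel drew in his 1933 double-negation paper): a formula P built from propositional variables using only negation ∼ and conjunction ∧ is true under every Boolean valuation if and only if for every Heyting algebra H and every valuation of the propositional variables in H, the interpretation of P (with ∼ interpreted as the Heyting pseudo-complement and ∧ as the meet) equals the top element of H. -/
open FNC

/-- Boolean valuation of negation-conjunction formulas. -/
def evalB (v : Nat → Bool) : FNC → Bool
  | var n => v n
  | neg P => !(evalB v P)
  | conj P Q => evalB v P && evalB v Q

/-- Interpretation of negation-conjunction formulas in a Heyting algebra: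
    ∧ as meet, ∼ as the Heyting pseudo-complement ¬a = a ⇨ ⊥. -/
def evalH {H : Type} [HeytingAlgebra H] (v : Nat → H) : FNC → H
  | var n => v n
  | neg P => (evalH v P)ᶜ
  | conj P Q => evalH v P ⊓ evalH v Q

def fncVars : FNC → List Nat
  | var n => [n]
  | neg P => fncVars P
  | conj P Q => fncVars P ++ fncVars Q

lemma bool_compl (x : Bool) : xᶜ = !x := by cases x <;> rfl
lemma bool_inf (x y : Bool) : x ⊓ y = (x && y) := by cases x <;> cases y <;> rfl

lemma evalH_bool (v : Nat → Bool) (P : FNC) : evalH v P = evalB v P := by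
  induction P with
  | var n => rfl
  | neg P ih => simp [evalH, evalB, ih, bool_compl]
  | conj P Q ihP ihQ => simp [evalH, evalB, ihP, ihQ, bool_inf]

lemma inf_evalH_congr {B : Type} [BooleanAlgebra B] (c : B) (v w : Nat → B) (P : FNC)
    (h : ∀ n ∈ fncVars P, c ⊓ v n = c ⊓ w n) :
    c ⊓ evalH v P = c ⊓ evalH w P := by
  induction P with
  | var n => exact h n (by simp [fncVars])
  | neg P ih =>
    have hP := ih (fun n hn => h n hn)
    have e : ∀ z : B, c ⊓ zᶜ = c ⊓ (c ⊓ z)ᶜ := by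
      intro z
      rw [compl_inf, inf_sup_left]
      simp
    show c ⊓ (evalH v P)ᶜ = c ⊓ (evalH w P)ᶜ
    rw [e (evalH v P), e (evalH w P), hP]
  | conj P Q ihP ihQ =>
    have hP := ihP (fun n hn => h n (by simp [fncVars, hn]))
    have hQ := ihQ (fun n hn => h n (by simp [fncVars, hn]))
    show c ⊓ (evalH v P ⊓ evalH v Q) = c ⊓ (evalH w P ⊓ evalH w Q)
    calc c ⊓ (evalH v P ⊓ evalH v Q) = (c ⊓ evalH v P) ⊓ (c ⊓ evalH v Q) :=
          inf_inf_distrib_left c _ _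
      _ = (c ⊓ evalH w P) ⊓ (c ⊓ evalH w Q) := by rw [hP, hQ]
      _ = c ⊓ (evalH w P ⊓ evalH w Q) := (inf_inf_distrib_left c _ _).symm

lemma evalH_of_two_valued {B : Type} [HeytingAlgebra B] (v : Nat → B) (u : Nat → Bool) (P : FNC)
    (h : ∀ n ∈ fncVars P, v n = (bif u n then ⊤ else ⊥)) :
    evalH v P = (bif evalB u P then ⊤ else ⊥) := by
  induction P with
  | var n => exact h n (by simp [fncVars])
  | neg P ih =>
    have hP := ih (fun n hn => h n hn)
    show (evalH v P)ᶜ = _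
    rw [hP]
    cases h' : evalB u P <;> simp [evalB, h']
  | conj P Q ihP ihQ =>
    have hP := ihP (fun n hn => h n (by simp [fncVars, hn]))
    have hQ := ihQ (fun n hn => h n (by simp [fncVars, hn]))
    show evalH v P ⊓ evalH v Q = _
    rw [hP, hQ]
    cases h1 : evalB u P <;> cases h2 : evalB u Q <;> simp [evalB, h1, h2]

lemma boolean_complete_aux {B : Type} [BooleanAlgebra B] (P : FNC)
    (htaut : ∀ u : Nat → Bool, evalB u P = true) :
    ∀ (L : List Nat) (v : Nat → B),
      (∀ n ∈ fncVars P, n ∈ L ∨ v n = ⊤ ∨ v n = ⊥) → evalH v P = ⊤ := by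
  intro L
  induction L with
  | nil =>
    intro v h
    classical
    set u : Nat → Bool := fun n => decide (v n = ⊤) with hu
    have hv : ∀ n ∈ fncVars P, v n = (bif u n then ⊤ else ⊥) := by
      intro n hn
      by_cases ht : v n = ⊤
      · simp [hu, ht]
      · have hb : v n = ⊥ := by
          rcases h n hn with hL | h' | h'
          · simp at hL
          · exact absurd h' ht
          · exact h'
        have hd : u n = false := by rw [hu]; exact decide_eq_false ht
        rw [hd, hb]
        rfl
    rw [evalH_of_two_valued v u P hv, htaut u]
    rfl
  | cons m L ih =>
    intro v h
    classical
    set vt : Nat → B := Function.update v m ⊤ with hvt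
    set vb : Nat → B := Function.update v m ⊥ with hvb
    have ht : evalH vt P = ⊤ := by
      apply ih
      intro n hn
      rcases eq_or_ne n m with rfl | hne
      · right; left; simp [hvt]
      · rcases h n hn with hL | h' | h'
        · simp at hL
          rcases hL with rfl | hL
          · exact absurd rfl hne
          · exact Or.inl hL
        · right; left; simpa [hvt, Function.update_of_ne hne] using h'
        · right; right; simpa [hvt, Function.update_of_ne hne] using h'
    have hb : evalH vb P = ⊤ := by
      apply ih
      intro n hn
      rcases eq_or_ne n m with rfl | hne
      · right; right; simp [hvb]
      · rcases h n hn with hL | h' | h'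
        · simp at hL
          rcases hL with rfl | hL
          · exact absurd rfl hne
          · exact Or.inl hL
        · right; left; simpa [hvb, Function.update_of_ne hne] using h'
        · right; right; simpa [hvb, Function.update_of_ne hne] using h'
    have e1 : v m ⊓ evalH v P = v m ⊓ evalH vt P := by
      apply inf_evalH_congr
      intro n _
      rcases eq_or_ne n m with rfl | hne
      · simp [hvt]
      · simp [hvt, Function.update_of_ne hne]
    have e2 : (v m)ᶜ ⊓ evalH v P = (v m)ᶜ ⊓ evalH vb P := by
      apply inf_evalH_congr
      intro n _
      rcases eq_or_ne n m with rfl | hne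
      · simp [hvb]
      · simp [hvb, Function.update_of_ne hne]
    have key : evalH v P = (v m ⊓ evalH v P) ⊔ ((v m)ᶜ ⊓ evalH v P) := by
      rw [← inf_sup_right, sup_compl_eq_top, top_inf_eq]
    rw [key, e1, e2, ht, hb]
    simp

lemma boolean_complete {B : Type} [BooleanAlgebra B] (P : FNC)
    (htaut : ∀ u : Nat → Bool, evalB u P = true) (v : Nat → B) : evalH v P = ⊤ :=
  boolean_complete_aux P htaut (fncVars P) v (fun n hn => Or.inl hn)

lemma evalH_regular {H : Type} [HeytingAlgebra H] (v : Nat → H) (P : FNC) :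
    ((evalH (fun n => Heyting.Regular.toRegular (v n)) P : Heyting.Regular H) : H)
      = (evalH v P)ᶜᶜ := by
  induction P with
  | var n => exact Heyting.Regular.coe_toRegular (v n)
  | neg P ih =>
    show ((evalH _ P : Heyting.Regular H) : H)ᶜ = (evalH v P)ᶜᶜᶜ
    rw [ih]
  | conj P Q ihP ihQ =>
    show ((evalH _ P : Heyting.Regular H) : H) ⊓ _ = ((evalH v P) ⊓ (evalH v Q))ᶜᶜ
    rw [ihP, ihQ, compl_compl_inf_distrib]

/-- For formulas in the negation-conjunction language, classical and
    intuitionistic validity coincide: P is a classical tautology iff its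
    interpretation is ⊤ in every Heyting algebra under every valuation. -/
theorem classical_iff_intuitionistic_valid (P : FNC) :
    (∀ v : Nat → Bool, evalB v P = true) ↔
      (∀ (H : Type) [HeytingAlgebra H] (v : Nat → H), evalH v P = ⊤) := by
  constructor
  · intro htaut
    induction P with
    | var n =>
      exfalso
      have := htaut (fun _ => false)
      simp [evalB] at this
    | neg Q _ =>
      intro H _ v
      show (evalH v Q)ᶜ = ⊤
      have hreg := evalH_regular v Q
      have hbool : evalH (fun n => Heyting.Regular.toRegular (v n)) (neg Q)
          = (⊤ : Heyting.Regular H) := boolean_complete (neg Q) htaut _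
      have hcoe : ((evalH (fun n => Heyting.Regular.toRegular (v n)) Q :
          Heyting.Regular H) : H)ᶜ = ⊤ := by
        rw [← Heyting.Regular.coe_compl]
        exact congrArg _ hbool
      rw [hreg, compl_compl_compl] at hcoe
      exact hcoe
    | conj Q R ihQ ihR =>
      intro H _ v
      have hQ : ∀ u : Nat → Bool, evalB u Q = true := by
        intro u; have := htaut u; simp [evalB] at this; exact this.1
      have hR : ∀ u : Nat → Bool, evalB u R = true := by
        intro u; have := htaut u; simp [evalB] at this; exact this.2
      show evalH v Q ⊓ evalH v R = ⊤
      rw [ihQ hQ H v, ihR hR H v, top_inf_eq]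
  · intro h v
    have := h Bool v
    rw [evalH_bool] at this
    exact this
end
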